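/- Let q ∈ L¹[0,1] be real-valued, t ∈ (0,π), and suppose: (i) the first eigenvalue λ₀(t) of L_t(q) satisfies λ₀(t) ≥ t², (ii) the eigenvalues satisfy λₙ(t) = (2πn+t)² + ∫₀¹ q dx + O(n⁻¹ log n), and (iii) λₙ(t) = (2πn+t)² for all n larger than some n₀. Then q = 0 almost everywhere on [0,1]. -/

import Mathlib

open MeasureTheory intervalIntegral Complex

open MeasureTheory intervalIntegral Complex

/-- The (real-valued) Rayleigh quotient of `y` for the operator `-y'' + q y` on `[0,1]`. -/
noncomputable def rayleighQuotientR (q : ℝ → ℝ) (y : ℝ → ℂ) : ℝ :=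
  (∫ x in (0:ℝ)..1,
      ((-(starRingEnd ℂ) (y x) * deriv (deriv y) x).re + q x * ‖y x‖^2)) /
  (∫ x in (0:ℝ)..1, ‖y x‖^2)

/-- Quasi-periodic boundary conditions for parameter `t`. -/
def QuasiPeriodicBC (t : ℝ) (y : ℝ → ℂ) : Prop :=
  y 1 = Complex.exp (Complex.I * t) * y 0 ∧ deriv y 1 = Complex.exp (Complex.I * t) * deriv y 0

/-- `y` is an eigenfunction of `L_t(q)` with eigenvalue `lam`. -/
def IsEigenfunction (q : ℝ → ℝ) (t lam : ℝ) (y : ℝ → ℂ) : Prop :=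
  ContDiff ℝ 2 y ∧ (∃ x ∈ Set.Icc (0:ℝ) 1, y x ≠ 0) ∧ QuasiPeriodicBC t y ∧
  ∀ᵐ x, x ∈ Set.Icc (0:ℝ) 1 → -deriv (deriv y) x + (q x : ℂ) * y x = (lam : ℂ) * y x

/-- `lam` is an eigenvalue of `L_t(q)`. -/
def IsEigenvalue (q : ℝ → ℝ) (t lam : ℝ) : Prop := ∃ y, IsEigenfunction q t lam y

/-- `lam0` is the smallest eigenvalue of `L_t(q)`. -/
def IsFirstEigenvalue (q : ℝ → ℝ) (t lam0 : ℝ) : Prop :=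
  IsEigenvalue q t lam0 ∧ ∀ lam, IsEigenvalue q t lam → lam0 ≤ lam

/-!
Writing a test function as `y = e^{itx} u` with `u` real and periodic, the Rayleigh quotient
becomes `t² + ∫(u'² + q u²) / ∫ u²`; so `λ₀(t) ≥ t²` says that the periodic form
`∫(u'² + q u²)` is nonnegative. Conditions (ii) and (iii) give `∫ q = 0`. Testing with
`u = 1 + ε g` for smooth `g` supported in `(0,1)` yields `0 ≤ 2ε ∫ q g + O(ε²)` for all `ε`,
hence `∫ q g = 0` for every such `g`, and `q = 0` a.e. by the fundamental lemma of the calculus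
of variations.
-/

open Filter Topology
open scoped ContDiff

noncomputable section

theorem tendsto_mul_log_div_atTop (C : ℝ) :
    Tendsto (fun n : ℕ => C * Real.log n / n) atTop (𝓝 0) := by
  have h := (Real.isLittleO_log_id_atTop.tendsto_div_nhds_zero.comp
    tendsto_natCast_atTop_atTop).const_mul C
  simpa [mul_div_assoc] using h

theorem eq_zero_of_forall_nonneg_mul_add_sq_mul {A K : ℝ}
    (h : ∀ ε : ℝ, 0 ≤ ε * A + ε ^ 2 * K) : A = 0 := by
  have hmin : IsLocalMin (fun ε : ℝ => ε * A + ε ^ 2 * K) 0 :=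
    Eventually.of_forall fun ε => by simpa using h ε
  have hderiv : HasDerivAt (fun ε : ℝ => ε * A + ε ^ 2 * K) A 0 := by
    refine (((hasDerivAt_id (0 : ℝ)).mul_const A).add
      ((hasDerivAt_pow 2 (0 : ℝ)).mul_const K)).congr_deriv ?_
    simp
  exact hmin.hasDerivAt_eq_zero hderiv

theorem integral_neg_mul_deriv_deriv {u : ℝ → ℝ} {a b : ℝ} (hu : ContDiff ℝ 2 u)
    (hab : u b * deriv u b = u a * deriv u a) :
    ∫ x in a..b, -(u x * deriv (deriv u) x) = ∫ x in a..b, deriv u x ^ 2 := by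
  have hu' : Differentiable ℝ (deriv u) := hu.differentiable_deriv_two
  have hparts := integral_mul_deriv_eq_deriv_mul (a := a) (b := b)
    (fun x _ => (hu.differentiable two_ne_zero x).hasDerivAt) (fun x _ => (hu' x).hasDerivAt)
    ((hu.continuous_deriv one_le_two).intervalIntegrable a b)
    ((hu.deriv'.continuous_deriv_one).intervalIntegrable a b)
  rw [intervalIntegral.integral_neg, hparts, hab]
  simp [sq]

/-- The Floquet–Bloch substitution `y = e^{itx} v`, which turns the quasi-periodic problem
`L_t(q)` into a periodic one for `v`. -/
def blochWave (t : ℝ) (v : ℝ → ℂ) : ℝ → ℂ := fun x => exp (I * t * x) * v x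

section blochWave

variable {t : ℝ} {v : ℝ → ℂ}

theorem hasDerivAt_blochWave {v' : ℂ} {x : ℝ} (hv : HasDerivAt v v' x) :
    HasDerivAt (blochWave t v) (exp (I * t * x) * (I * t * v x + v')) x := by
  have hphase : HasDerivAt (fun x : ℝ => I * t * (x : ℂ)) (I * t) x := by
    simpa using (hasDerivAt_id (x : ℂ)).comp_ofReal.const_mul (I * t)
  refine (hphase.cexp.mul hv).congr_deriv ?_
  ring

theorem deriv_blochWave (hv : Differentiable ℝ v) :
    deriv (blochWave t v) = blochWave t (fun x => I * t * v x + deriv v x) :=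
  funext fun x => (hasDerivAt_blochWave (hv x).hasDerivAt).deriv

theorem deriv_deriv_blochWave (hv : ContDiff ℝ 2 v) :
    deriv (deriv (blochWave t v)) =
      blochWave t (fun x => -t ^ 2 * v x + 2 * I * t * deriv v x + deriv (deriv v) x) := by
  have hv₁ : Differentiable ℝ v := hv.differentiable two_ne_zero
  have hv₂ : Differentiable ℝ (deriv v) := hv.differentiable_deriv_two
  have hv₃ : Differentiable ℝ (fun x => I * t * v x + deriv v x) :=
    (hv₁.const_mul (I * t)).add hv₂
  rw [deriv_blochWave hv₁, deriv_blochWave hv₃]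
  ext x
  have hinner :
      deriv (fun x => I * t * v x + deriv v x) x = I * t * deriv v x + deriv (deriv v) x :=
    (((hv₁ x).hasDerivAt.const_mul (I * t)).add (hv₂ x).hasDerivAt).deriv
  simp only [blochWave, hinner]
  linear_combination exp (I * t * x) * t ^ 2 * v x * I_sq

theorem conj_blochWave_mul_blochWave (w : ℝ → ℂ) (x : ℝ) :
    starRingEnd ℂ (blochWave t v x) * blochWave t w x = starRingEnd ℂ (v x) * w x := by
  have hunit : starRingEnd ℂ (exp (I * t * x)) * exp (I * t * x) = 1 := by
    rw [← exp_conj, ← exp_add]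
    simp
  calc starRingEnd ℂ (blochWave t v x) * blochWave t w x
      = (starRingEnd ℂ (exp (I * t * x)) * exp (I * t * x)) * (starRingEnd ℂ (v x) * w x) := by
        simp only [blochWave, map_mul]; ring
    _ = starRingEnd ℂ (v x) * w x := by rw [hunit, one_mul]

theorem norm_blochWave (x : ℝ) : ‖blochWave t v x‖ = ‖v x‖ := by
  simp [blochWave, norm_exp]

theorem contDiff_blochWave {n : WithTop ℕ∞} (hv : ContDiff ℝ n v) :
    ContDiff ℝ n (blochWave t v) := by
  have hphase : ContDiff ℝ n (fun x : ℝ => I * t * (x : ℂ)) :=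
    contDiff_const.mul ofRealCLM.contDiff
  exact ((contDiff_exp (𝕜 := ℂ)).restrict_scalars ℝ |>.comp hphase).mul hv

theorem quasiPeriodicBC_blochWave (hv : Differentiable ℝ v) (h₀ : v 1 = v 0)
    (h₁ : deriv v 1 = deriv v 0) : QuasiPeriodicBC t (blochWave t v) := by
  refine ⟨?_, ?_⟩
  · simp [blochWave, h₀]
  · simp [deriv_blochWave hv, blochWave, h₀, h₁]

end blochWave

theorem intervalIntegrable_mul_of_integrableOn_Icc {q f : ℝ → ℝ} {a b : ℝ} (hab : a ≤ b)
    (hq : IntegrableOn q (Set.Icc a b)) (hf : Continuous f) :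
    IntervalIntegrable (fun x => q x * f x) volume a b :=
  (intervalIntegrable_iff_integrableOn_Icc_of_le hab).mpr
    (hq.mul_continuousOn hf.continuousOn isCompact_Icc)

/-- The quadratic form of `-y'' + q y` under periodic boundary conditions. -/
def periodicQuadForm (q u : ℝ → ℝ) : ℝ := ∫ x in (0:ℝ)..1, (deriv u x ^ 2 + q x * u x ^ 2)

theorem deriv_ofReal_comp {u : ℝ → ℝ} (hu : Differentiable ℝ u) :
    deriv (fun x => (u x : ℂ)) = fun x => ((deriv u x : ℝ) : ℂ) :=
  funext fun x => (hu x).hasDerivAt.ofReal_comp.deriv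

section periodicQuadForm

variable {q u : ℝ → ℝ} {t : ℝ}

theorem re_conj_blochWave_mul_deriv_deriv (hu : ContDiff ℝ 2 u) (x : ℝ) :
    (starRingEnd ℂ (blochWave t (fun x => u x) x) *
      deriv (deriv (blochWave t (fun x => u x))) x).re =
      u x * deriv (deriv u) x - t ^ 2 * u x ^ 2 := by
  have hv : ContDiff ℝ 2 (fun x => (u x : ℂ)) := ofRealCLM.contDiff.comp hu
  rw [deriv_deriv_blochWave hv, conj_blochWave_mul_blochWave,
    deriv_ofReal_comp (hu.differentiable two_ne_zero),
    deriv_ofReal_comp hu.differentiable_deriv_two]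
  simp [sq]
  ring

theorem rayleighQuotientR_blochWave (hq : IntegrableOn q (Set.Icc 0 1)) (hu : ContDiff ℝ 2 u)
    (hb : u 1 * deriv u 1 = u 0 * deriv u 0) :
    rayleighQuotientR q (blochWave t (fun x => u x)) =
      (t ^ 2 * (∫ x in (0:ℝ)..1, u x ^ 2) + periodicQuadForm q u) / ∫ x in (0:ℝ)..1, u x ^ 2 := by
  have hcu : Continuous u := hu.continuous
  have hI₁ : IntervalIntegrable (fun x => t ^ 2 * u x ^ 2) volume 0 1 :=
    (hcu.pow 2).intervalIntegrable 0 1 |>.const_mul _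
  have hI₂ : IntervalIntegrable (fun x => -(u x * deriv (deriv u) x)) volume 0 1 :=
    (hcu.mul hu.deriv'.continuous_deriv_one).neg.intervalIntegrable 0 1
  have hI₃ : IntervalIntegrable (fun x => deriv u x ^ 2) volume 0 1 :=
    ((hu.continuous_deriv one_le_two).pow 2).intervalIntegrable 0 1
  have hI₄ : IntervalIntegrable (fun x => q x * u x ^ 2) volume 0 1 :=
    intervalIntegrable_mul_of_integrableOn_Icc zero_le_one hq (hcu.pow 2)
  have hintegrand (x : ℝ) : (-(starRingEnd ℂ) (blochWave t (fun x => u x) x) *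
        deriv (deriv (blochWave t (fun x => u x))) x).re +
        q x * ‖blochWave t (fun x => u x) x‖ ^ 2 =
      t ^ 2 * u x ^ 2 + -(u x * deriv (deriv u) x) + q x * u x ^ 2 := by
    rw [neg_mul, neg_re, re_conj_blochWave_mul_deriv_deriv hu, norm_blochWave, norm_real,
      Real.norm_eq_abs, sq_abs]
    ring
  rw [rayleighQuotientR, intervalIntegral.integral_congr fun x _ => hintegrand x]
  simp only [norm_blochWave, norm_real, Real.norm_eq_abs, sq_abs]
  rw [intervalIntegral.integral_add (hI₁.add hI₂) hI₄, intervalIntegral.integral_add hI₁ hI₂,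
    intervalIntegral.integral_const_mul, integral_neg_mul_deriv_deriv hu hb, periodicQuadForm,
    intervalIntegral.integral_add hI₃ hI₄, add_assoc]

theorem periodicQuadForm_nonneg (hq : IntegrableOn q (Set.Icc 0 1))
    (hvar : ∀ y : ℝ → ℂ, ContDiff ℝ 2 y → (∃ x ∈ Set.Icc (0:ℝ) 1, y x ≠ 0) →
      QuasiPeriodicBC t y → t ^ 2 ≤ rayleighQuotientR q y)
    (hu : ContDiff ℝ 2 u) (h₀ : u 1 = u 0) (h₁ : deriv u 1 = deriv u 0)
    (hne : ∃ x ∈ Set.Icc (0:ℝ) 1, u x ≠ 0) :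
    0 ≤ periodicQuadForm q u := by
  have hv : ContDiff ℝ 2 (fun x => (u x : ℂ)) := ofRealCLM.contDiff.comp hu
  have hbc : QuasiPeriodicBC t (blochWave t (fun x => u x)) := by
    refine quasiPeriodicBC_blochWave (hv.differentiable two_ne_zero) (by simp [h₀]) ?_
    simp [deriv_ofReal_comp (hu.differentiable two_ne_zero), h₁]
  have hne' : ∃ x ∈ Set.Icc (0:ℝ) 1, blochWave t (fun x => u x) x ≠ 0 := by
    obtain ⟨x, hx, hux⟩ := hne
    exact ⟨x, hx, by simp [blochWave, hux]⟩
  have hmass : 0 < ∫ x in (0:ℝ)..1, u x ^ 2 := by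
    obtain ⟨x, hx, hux⟩ := hne
    exact integral_pos zero_lt_one (hu.continuous.pow 2).continuousOn
      (fun x _ => sq_nonneg (u x)) ⟨x, hx, by positivity⟩
  have hR := hvar _ (contDiff_blochWave hv) hne' hbc
  rw [rayleighQuotientR_blochWave hq hu (by rw [h₀, h₁]), le_div_iff₀ hmass] at hR
  linarith

theorem periodicQuadForm_one_add_mul {g : ℝ → ℝ} (hq : IntegrableOn q (Set.Icc 0 1))
    (hg : ContDiff ℝ 1 g) (ε : ℝ) :
    periodicQuadForm q (fun x => 1 + ε * g x) =
      (∫ x in (0:ℝ)..1, q x) + ε * (2 * ∫ x in (0:ℝ)..1, q x * g x) +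
        ε ^ 2 * periodicQuadForm q g := by
  have hderiv : deriv (fun x => 1 + ε * g x) = fun x => ε * deriv g x :=
    funext fun x => by
      simp [deriv_const_mul _ ((hg.differentiable one_ne_zero) x)]
  have hcg : Continuous g := hg.continuous
  have hq' : IntervalIntegrable q volume 0 1 :=
    (intervalIntegrable_iff_integrableOn_Icc_of_le zero_le_one).mpr hq
  have hqg : IntervalIntegrable (fun x => q x * g x) volume 0 1 :=
    intervalIntegrable_mul_of_integrableOn_Icc zero_le_one hq hcg
  have hQg : IntervalIntegrable (fun x => deriv g x ^ 2 + q x * g x ^ 2) volume 0 1 :=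
    ((hg.continuous_deriv le_rfl).pow 2).intervalIntegrable 0 1 |>.add
      (intervalIntegrable_mul_of_integrableOn_Icc zero_le_one hq (hcg.pow 2))
  have hexpand : ∀ x, deriv (fun x => 1 + ε * g x) x ^ 2 + q x * (1 + ε * g x) ^ 2 =
      q x + ε * (2 * (q x * g x)) + ε ^ 2 * (deriv g x ^ 2 + q x * g x ^ 2) := by
    intro x; rw [hderiv]; ring
  rw [periodicQuadForm, intervalIntegral.integral_congr fun x _ => hexpand x,
    intervalIntegral.integral_add (hq'.add (hqg.const_mul 2 |>.const_mul ε)) (hQg.const_mul _),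
    intervalIntegral.integral_add hq' (hqg.const_mul 2 |>.const_mul ε),
    intervalIntegral.integral_const_mul, intervalIntegral.integral_const_mul,
    intervalIntegral.integral_const_mul, periodicQuadForm]

theorem integral_mul_eq_zero_of_rayleighQuotientR_ge (hq : IntegrableOn q (Set.Icc 0 1))
    (hvar : ∀ y : ℝ → ℂ, ContDiff ℝ 2 y → (∃ x ∈ Set.Icc (0:ℝ) 1, y x ≠ 0) →
      QuasiPeriodicBC t y → t ^ 2 ≤ rayleighQuotientR q y)
    (hint : ∫ x in (0:ℝ)..1, q x = 0) {g : ℝ → ℝ} (hg : ContDiff ℝ ∞ g)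
    (hgs : tsupport g ⊆ Set.Ioo 0 1) :
    ∫ x in (0:ℝ)..1, q x * g x = 0 := by
  have hvanish : ∀ x ∉ Set.Ioo (0:ℝ) 1, g x = 0 ∧ deriv g x = 0 := fun x hx =>
    ⟨image_eq_zero_of_notMem_tsupport fun h => hx (hgs h),
      Function.notMem_support.mp fun h => hx (hgs (support_deriv_subset h))⟩
  obtain ⟨hg0, hg0'⟩ := hvanish 0 (by simp)
  obtain ⟨hg1, hg1'⟩ := hvanish 1 (by simp)
  have hg₂ : ContDiff ℝ 2 g := hg.of_le (by norm_cast)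
  have hQ (ε : ℝ) : 0 ≤ ε * (2 * ∫ x in (0:ℝ)..1, q x * g x) + ε ^ 2 * periodicQuadForm q g := by
    have hderiv (x : ℝ) : deriv (fun x => 1 + ε * g x) x = ε * deriv g x := by
      simp [deriv_const_mul _ ((hg₂.differentiable two_ne_zero) x)]
    have hnonneg := periodicQuadForm_nonneg (u := fun x => 1 + ε * g x) hq hvar
      (contDiff_const.add (contDiff_const.mul hg₂)) (by simp [hg0, hg1])
      (by simp only [hderiv, hg0', hg1']) ⟨0, by simp, by simp [hg0]⟩
    rwa [periodicQuadForm_one_add_mul hq (hg₂.of_le one_le_two) ε, hint, zero_add] at hnonneg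
  have := eq_zero_of_forall_nonneg_mul_add_sq_mul hQ
  linarith

end periodicQuadForm

theorem ae_eq_zero_on_Icc_of_integral_mul_eq_zero {q : ℝ → ℝ} {a b : ℝ} (hab : a ≤ b)
    (hq : IntegrableOn q (Set.Icc a b))
    (h : ∀ g : ℝ → ℝ, ContDiff ℝ ∞ g → tsupport g ⊆ Set.Ioo a b → ∫ x in a..b, q x * g x = 0) :
    ∀ᵐ x, x ∈ Set.Icc a b → q x = 0 := by
  have hIoo : ∀ᵐ x, x ∈ Set.Ioo a b → q x = 0 := by
    refine isOpen_Ioo.ae_eq_zero_of_integral_contDiff_smul_eq_zero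
      (hq.mono_set Set.Ioo_subset_Icc_self).locallyIntegrableOn fun g hg _ hgs => ?_
    have hout : ∀ x ∉ Set.Ioc a b, g x • q x = 0 := fun x hx => by
      rw [image_eq_zero_of_notMem_tsupport fun h => hx (Set.Ioo_subset_Ioc_self (hgs h)),
        zero_smul]
    rw [← setIntegral_eq_integral_of_forall_compl_eq_zero hout, ← h g hg hgs,
      integral_of_le hab]
    simp only [smul_eq_mul, mul_comm]
  filter_upwards [hIoo, (Ioo_ae_eq_Icc (a := a) (b := b) (μ := volume))] with x hx hmem hxIcc
  exact hx (hmem.mpr hxIcc)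

end

theorem ambarzumyan_quasiperiodic_reduced_general (q : ℝ → ℝ)
    (hq : IntegrableOn q (Set.Icc (0:ℝ) 1)) (t : ℝ)
    (lam : ℕ → ℝ)
    (hvar : ∀ y : ℝ → ℂ, ContDiff ℝ 2 y → (∃ x ∈ Set.Icc (0:ℝ) 1, y x ≠ 0) →
      QuasiPeriodicBC t y → lam 0 ≤ rayleighQuotientR q y)
    (h0 : lam 0 ≥ t^2)
    (hasymp : ∃ C : ℝ, ∀ n : ℕ, 2 ≤ n →
      |lam n - ((2 * Real.pi * n + t)^2 + ∫ x in (0:ℝ)..1, q x)| ≤ C * Real.log n / n)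
    (hn0 : ∃ n0 : ℕ, ∀ n > n0, lam n = (2 * Real.pi * n + t)^2) :
    ∀ᵐ x, x ∈ Set.Icc (0:ℝ) 1 → q x = 0 := by
  obtain ⟨C, hC⟩ := hasymp
  obtain ⟨n0, hlam⟩ := hn0
  have hint : ∫ x in (0:ℝ)..1, q x = 0 := by
    refine abs_nonpos_iff.mp (ge_of_tendsto (tendsto_mul_log_div_atTop C) ?_)
    filter_upwards [eventually_ge_atTop (max 2 (n0 + 1))] with n hn
    have hbound := hC n (le_of_max_le_left hn)
    rwa [hlam n (le_of_max_le_right hn), sub_add_cancel_left, abs_neg] at hbound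
  have hvar' (y : ℝ → ℂ) (hy : ContDiff ℝ 2 y) (hne : ∃ x ∈ Set.Icc (0:ℝ) 1, y x ≠ 0)
      (hbc : QuasiPeriodicBC t y) : t ^ 2 ≤ rayleighQuotientR q y :=
    h0.trans (hvar y hy hne hbc)
  exact ae_eq_zero_on_Icc_of_integral_mul_eq_zero zero_le_one hq fun g hg hgs =>
    integral_mul_eq_zero_of_rayleighQuotientR_ge hq hvar' hint hg hgs

/-- Theorem 4(a): `t ∈ (0,π)`, with (i) the first eigenvalue `λ₀(t) ≥ t²`
(and the variational principle), (ii) eigenvalue asymptotics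
`λₙ(t) = (2πn+t)² + ∫₀¹ q + O(n⁻¹ log n)`, and (iii) `λₙ(t) = (2πn+t)²` for all
`n > n₀`; then `q = 0` a.e. -/
theorem ambarzumyan_quasiperiodic_reduced (q : ℝ → ℝ)
    (hq : IntegrableOn q (Set.Icc (0:ℝ) 1)) (t : ℝ) (ht : t ∈ Set.Ioo 0 Real.pi)
    (lam : ℕ → ℝ)
    (hfirst : IsFirstEigenvalue q t (lam 0))
    (heig : ∀ n, IsEigenvalue q t (lam n))
    (hvar : ∀ y : ℝ → ℂ, ContDiff ℝ 2 y → (∃ x ∈ Set.Icc (0:ℝ) 1, y x ≠ 0) →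
      QuasiPeriodicBC t y → lam 0 ≤ rayleighQuotientR q y)
    (h0 : lam 0 ≥ t^2)
    (hasymp : ∃ C : ℝ, ∀ n : ℕ, 2 ≤ n →
      |lam n - ((2 * Real.pi * n + t)^2 + ∫ x in (0:ℝ)..1, q x)| ≤ C * Real.log n / n)
    (hn0 : ∃ n0 : ℕ, ∀ n > n0, lam n = (2 * Real.pi * n + t)^2) :
    ∀ᵐ x, x ∈ Set.Icc (0:ℝ) 1 → q x = 0 :=
  ambarzumyan_quasiperiodic_reduced_general q hq t lam hvar h0 hasymp hn0
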